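/- Under the hypotheses of the main existence theorem (a bounded continuous; f Lipschitz in x with continuous coefficient m; u with modulus n(t)Φ; φ(t)=m(t)n(t)t^α, ψ(t)=m(t)u*(t)t^α, ξ(t)=n(t)|f(t,0)|t^α, η(t)=u*(t)|f(t,0)|t^α all bounded with φ, ξ → 0 at ∞; and existence of r₀ > 0 with ‖a‖Γ(α+1) + φ*r₀Φ(r₀,r₀) + ψ*r₀ + ξ*Φ(r₀,r₀) + η* ≤ r₀Γ(α+1) and φ*Φ(r₀,r₀) + ψ* < Γ(α+1)), the operator F defined by (Fx)(t) = a(t) + (f(t,x(t))/Γ(α)) ∫₀^t u(t,s,x(s),x(λs))(t−s)^{α−1} ds maps the closed ball B_{r₀} of BC(ℝ≥0) into itself. -/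

import Mathlib

/-!
Substituting `s = tτ` turns `∫₀ᵗ w(t,s) (t-s)^{α-1} ds` into `t^α ∫₀¹ w(t,tτ) (1-τ)^{α-1} dτ`,
whose integrand is continuous in `t` and, locally in `t`, dominated by a constant multiple of the
integrable kernel `(1-τ)^{α-1}`; continuity of `𝓕x` follows by dominated convergence.
For the bound, `|f(t,x(t))| ≤ m(t) r₀ + |f(t,0)|` and `|u(t,s,x(s),x(λs))| ≤ u*(t) + n(t) Φ(r₀,r₀)`,
while `∫₀ᵗ (t-s)^{α-1} ds = t^α/α` and `α Γ(α) = Γ(α+1)`. Expanding the product of the two bounds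
times `t^α` gives four terms, each dominated by one of `φ*`, `ψ*`, `ξ*`, `η*`.
-/

open Real intervalIntegral
open Set MeasureTheory

section RiemannLiouville

variable {α : ℝ}

theorem intervalIntegrable_sub_rpow (hα : 0 < α) (t : ℝ) :
    IntervalIntegrable (fun s => (t - s) ^ (α - 1)) volume 0 t := by
  simpa using
    (intervalIntegrable_rpow' (a := t) (b := 0) (r := α - 1) (by linarith)).comp_sub_left t

theorem integral_sub_rpow (hα : 0 < α) (t : ℝ) :
    ∫ s in (0:ℝ)..t, (t - s) ^ (α - 1) = t ^ α / α := by
  rw [integral_comp_sub_left (fun s => s ^ (α - 1)), sub_self, sub_zero,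
    integral_rpow (Or.inl (by linarith)), zero_rpow (by linarith), sub_add_cancel, sub_zero]

theorem integral_mul_sub_rpow_eq (hα : 0 < α) (v : ℝ → ℝ) {t : ℝ} (ht : 0 ≤ t) :
    ∫ s in (0:ℝ)..t, v s * (t - s) ^ (α - 1) =
      t ^ α * ∫ τ in (0:ℝ)..1, v (t * τ) * (1 - τ) ^ (α - 1) := by
  rcases ht.eq_or_lt with rfl | ht
  · simp [zero_rpow hα.ne']
  have hkernel : ∀ τ ∈ uIcc (0:ℝ) 1,
      v (t * τ) * (t - t * τ) ^ (α - 1) = t ^ (α - 1) * (v (t * τ) * (1 - τ) ^ (α - 1)) := by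
    intro τ hτ
    rw [uIcc_of_le zero_le_one] at hτ
    rw [← mul_one_sub, mul_rpow ht.le (by linarith [hτ.2])]
    ring
  have hsubst :=
    smul_integral_comp_mul_left (a := 0) (b := 1) (fun s => v s * (t - s) ^ (α - 1)) t
  rw [mul_zero, mul_one] at hsubst
  rw [← hsubst, integral_congr hkernel, intervalIntegral.integral_const_mul, smul_eq_mul,
    ← mul_assoc, ← rpow_one_add' ht.le (by linarith), add_sub_cancel]

theorem continuousOn_integral_comp_mul_mul {w : ℝ → ℝ → ℝ} {k : ℝ → ℝ}
    (hw : ContinuousOn (Function.uncurry w) (Ici 0 ×ˢ Ici 0))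
    (hk : IntervalIntegrable k volume 0 1) :
    ContinuousOn (fun t => ∫ τ in (0:ℝ)..1, w t (t * τ) * k τ) (Ici 0) := by
  intro t₀ ht₀
  have hIcc : Icc (0:ℝ) (t₀ + 1) ⊆ Ici 0 := Icc_subset_Ici_self
  obtain ⟨C, hC⟩ := (isCompact_Icc.prod isCompact_Icc).exists_bound_of_continuousOn
    (hw.mono (prod_mono hIcc hIcc))
  have hmaps : ∀ t ∈ Ici (0:ℝ), ∀ τ ∈ uIoc (0:ℝ) 1, (t, t * τ) ∈ Ici (0:ℝ) ×ˢ Ici 0 := by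
    intro t ht τ hτ
    rw [uIoc_of_le zero_le_one] at hτ
    exact ⟨ht, mul_nonneg ht hτ.1.le⟩
  refine continuousWithinAt_of_dominated_interval (bound := fun τ => C * ‖k τ‖) ?_ ?_
    (hk.norm.const_mul C) ?_
  · filter_upwards [self_mem_nhdsWithin] with t ht
    refine (ContinuousOn.aestronglyMeasurable ?_ measurableSet_uIoc).mul
      hk.def'.aestronglyMeasurable
    exact hw.comp (continuousOn_const.prodMk (continuousOn_const.mul continuousOn_id)) (hmaps t ht)
  · filter_upwards [nhdsWithin_le_nhds (Iio_mem_nhds (lt_add_one t₀)), self_mem_nhdsWithin]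
      with t htt₀ ht
    refine ae_of_all _ fun τ hτ => ?_
    rw [uIoc_of_le zero_le_one] at hτ
    have hmem : (t, t * τ) ∈ Icc (0:ℝ) (t₀ + 1) ×ˢ Icc (0:ℝ) (t₀ + 1) :=
      ⟨⟨ht, htt₀.le⟩, mul_nonneg ht hτ.1.le,
        (mul_le_of_le_one_right ht hτ.2).trans htt₀.le⟩
    rw [norm_mul]
    exact mul_le_mul_of_nonneg_right (hC _ hmem) (norm_nonneg _)
  · refine ae_of_all _ fun τ hτ => ContinuousWithinAt.mul ?_ continuousWithinAt_const
    exact hw.comp (continuousOn_id.prodMk (continuousOn_id.mul continuousOn_const))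
      (fun t ht => hmaps t ht τ hτ) t₀ ht₀

theorem continuousOn_integral_mul_sub_rpow (hα : 0 < α) {w : ℝ → ℝ → ℝ}
    (hw : ContinuousOn (Function.uncurry w) (Ici 0 ×ˢ Ici 0)) :
    ContinuousOn (fun t => ∫ s in (0:ℝ)..t, w t s * (t - s) ^ (α - 1)) (Ici 0) := by
  have hG := continuousOn_integral_comp_mul_mul hw (intervalIntegrable_sub_rpow hα 1)
  refine ((continuousOn_id.rpow_const fun _ _ => Or.inr hα.le).mul hG).congr fun t ht => ?_
  exact integral_mul_sub_rpow_eq hα (w t) ht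

theorem abs_integral_mul_sub_rpow_le (hα : 0 < α) {v : ℝ → ℝ} {t K : ℝ} (ht : 0 ≤ t)
    (hK : ∀ s ∈ Icc 0 t, |v s| ≤ K) :
    |∫ s in (0:ℝ)..t, v s * (t - s) ^ (α - 1)| ≤ K * (t ^ α / α) := by
  rw [← integral_sub_rpow hα, ← intervalIntegral.integral_const_mul, ← Real.norm_eq_abs]
  refine norm_integral_le_of_norm_le ht (ae_of_all _ fun s hs => ?_)
    ((intervalIntegrable_sub_rpow hα t).const_mul K)
  have hkernel : 0 ≤ (t - s) ^ (α - 1) := rpow_nonneg (by linarith [hs.2]) _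
  rw [norm_mul, Real.norm_eq_abs, Real.norm_of_nonneg hkernel]
  exact mul_le_mul_of_nonneg_right (hK s (Ioc_subset_Icc_self hs)) hkernel

end RiemannLiouville

theorem continuousOn_comp_delay {u : ℝ → ℝ → ℝ → ℝ → ℝ} {x : ℝ → ℝ} {l : ℝ}
    (hu : ContinuousOn (fun p : ℝ × ℝ × ℝ × ℝ => u p.1 p.2.1 p.2.2.1 p.2.2.2)
      (Ici 0 ×ˢ Ici 0 ×ˢ univ ×ˢ univ))
    (hx : ContinuousOn x (Ici 0)) (hl : 0 ≤ l) :
    ContinuousOn (Function.uncurry fun t s => u t s (x s) (x (l * s))) (Ici 0 ×ˢ Ici 0) := by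
  have hxs : ContinuousOn (fun p : ℝ × ℝ => x p.2) (Ici 0 ×ˢ Ici 0) :=
    hx.comp continuousOn_snd fun p hp => hp.2
  have hxls : ContinuousOn (fun p : ℝ × ℝ => x (l * p.2)) (Ici 0 ×ˢ Ici 0) :=
    hx.comp (continuousOn_const.mul continuousOn_snd) fun p hp => mul_nonneg hl hp.2
  exact hu.comp (continuousOn_fst.prodMk (continuousOn_snd.prodMk (hxs.prodMk hxls)))
    fun p hp => ⟨hp.1, hp.2, trivial, trivial⟩

theorem add_mul_add_mul_le {m n v c T r P φ ψ ξ η : ℝ} (hr : 0 ≤ r) (hP : 0 ≤ P)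
    (hφ : m * n * T ≤ φ) (hψ : m * v * T ≤ ψ) (hξ : n * c * T ≤ ξ) (hη : v * c * T ≤ η) :
    (m * r + c) * ((v + n * P) * T) ≤ φ * r * P + ψ * r + ξ * P + η :=
  calc (m * r + c) * ((v + n * P) * T)
      = m * n * T * (r * P) + m * v * T * r + n * c * T * P + v * c * T := by ring
    _ ≤ φ * (r * P) + ψ * r + ξ * P + η := by gcongr
    _ = φ * r * P + ψ * r + ξ * P + η := by ring

theorem abs_add_div_Gamma_mul_le {α A M K T S r a b I : ℝ} (hα : 0 < α) (ha : |a| ≤ A)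
    (hb : |b| ≤ M) (hI : |I| ≤ K * (T / α)) (hMKT : M * (K * T) ≤ S)
    (hr : A * Gamma (α + 1) + S ≤ r * Gamma (α + 1)) :
    |a + b / Gamma α * I| ≤ r := by
  have hΓ : 0 < Gamma α := Gamma_pos_of_pos hα
  have hΓ₁ : 0 < Gamma (α + 1) := Gamma_pos_of_pos (by linarith)
  have hbI : |b / Gamma α * I| ≤ S / Gamma (α + 1) :=
    calc |b / Gamma α * I| = |b| / Gamma α * |I| := by rw [abs_mul, abs_div, abs_of_pos hΓ]
      _ ≤ M / Gamma α * (K * (T / α)) := by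
        gcongr
        exact div_nonneg ((abs_nonneg b).trans hb) hΓ.le
      _ = M * (K * T) / Gamma (α + 1) := by
        rw [Gamma_add_one hα.ne']
        field_simp
      _ ≤ S / Gamma (α + 1) := by gcongr
  calc |a + b / Gamma α * I| ≤ |a| + |b / Gamma α * I| := abs_add_le _ _
    _ ≤ A + S / Gamma (α + 1) := add_le_add ha hbI
    _ ≤ r := by
      rw [← le_sub_iff_add_le', div_le_iff₀ hΓ₁]
      linarith

theorem stmt9_general
    (α l : ℝ) (hα : 0 < α) (hl : 0 < l)
    (a m n : ℝ → ℝ) (f : ℝ → ℝ → ℝ) (u : ℝ → ℝ → ℝ → ℝ → ℝ) (Φ : ℝ → ℝ → ℝ)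
    (ustar : ℝ → ℝ) (normA φs ψs ξs ηs r₀ : ℝ)
    -- (h₁) : a is continuous and bounded on ℝ≥0, with sup norm normA
    (ha : ContinuousOn a (Set.Ici 0))
    (hA : IsLUB ((fun t => |a t|) '' Set.Ici 0) normA)
    -- (h₂) : f is continuous and Lipschitz in its second variable with coefficient m
    (hf : ContinuousOn (fun p : ℝ × ℝ => f p.1 p.2) (Set.Ici 0 ×ˢ Set.univ))
    (hm0 : ∀ t ∈ Set.Ici (0:ℝ), 0 ≤ m t)
    (hLip : ∀ t ∈ Set.Ici (0:ℝ), ∀ x y : ℝ, |f t x - f t y| ≤ m t * |x - y|)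
    -- (h₃) : u is continuous with modulus of continuity n(t) Φ
    (hu : ContinuousOn (fun p : ℝ × ℝ × ℝ × ℝ => u p.1 p.2.1 p.2.2.1 p.2.2.2)
      (Set.Ici 0 ×ˢ Set.Ici 0 ×ˢ Set.univ ×ˢ Set.univ))
    (hn0 : ∀ t ∈ Set.Ici (0:ℝ), 0 ≤ n t)
    (hΦmono : ∀ p q p' q' : ℝ, 0 ≤ p → 0 ≤ q → p ≤ p' → q ≤ q' → Φ p q ≤ Φ p' q')
    (hΦnn : ∀ p q : ℝ, 0 ≤ p → 0 ≤ q → 0 ≤ Φ p q)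
    (humod : ∀ t s : ℝ, 0 ≤ s → s ≤ t → ∀ x₁ y₁ x₂ y₂ : ℝ,
      |u t s x₂ y₂ - u t s x₁ y₁| ≤ n t * Φ |x₂ - x₁| |y₂ - y₁|)
    -- u*(t) = max_{0 ≤ s ≤ t} |u(t,s,0,0)|
    (hustar : ∀ t ∈ Set.Ici (0:ℝ),
      IsGreatest ((fun s => |u t s 0 0|) '' Set.Icc 0 t) (ustar t))
    -- (h₄) : φ, ψ, ξ, η are bounded with suprema φ*, ψ*, ξ*, η*, and φ, ξ → 0 at ∞
    (hφlub : IsLUB ((fun t => m t * n t * t ^ α) '' Set.Ici 0) φs)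
    (hψlub : IsLUB ((fun t => m t * ustar t * t ^ α) '' Set.Ici 0) ψs)
    (hξlub : IsLUB ((fun t => n t * |f t 0| * t ^ α) '' Set.Ici 0) ξs)
    (hηlub : IsLUB ((fun t => ustar t * |f t 0| * t ^ α) '' Set.Ici 0) ηs)
    -- (h₅)
    (hr₀ : 0 < r₀)
    (hineq : normA * Real.Gamma (α + 1) +
      (φs * r₀ * Φ r₀ r₀ + ψs * r₀ + ξs * Φ r₀ r₀ + ηs) ≤ r₀ * Real.Gamma (α + 1))
    -- x ∈ B_{r₀}
    (x : ℝ → ℝ) (hx : ContinuousOn x (Set.Ici 0))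
    (hxr : ∀ t ∈ Set.Ici (0:ℝ), |x t| ≤ r₀) :
    ContinuousOn
      (fun t : ℝ => a t + (f t (x t) / Real.Gamma α) *
        ∫ s in (0:ℝ)..t, u t s (x s) (x (l * s)) * (t - s) ^ (α - 1))
      (Set.Ici 0) ∧
    ∀ t ∈ Set.Ici (0:ℝ),
      |a t + (f t (x t) / Real.Gamma α) *
        ∫ s in (0:ℝ)..t, u t s (x s) (x (l * s)) * (t - s) ^ (α - 1)| ≤ r₀ := by
  have hfx : ContinuousOn (fun t => f t (x t)) (Ici 0) :=
    hf.comp (continuousOn_id.prodMk hx) fun t ht => ⟨ht, trivial⟩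
  refine ⟨ha.add ((hfx.div_const _).mul
    (continuousOn_integral_mul_sub_rpow hα (continuousOn_comp_delay hu hx hl.le))), fun t ht => ?_⟩
  have hf_le : |f t (x t)| ≤ m t * r₀ + |f t 0| := by
    have hLip_t := hLip t ht (x t) 0
    rw [sub_zero] at hLip_t
    linarith [abs_sub_abs_le_abs_sub (f t (x t)) (f t 0),
      mul_le_mul_of_nonneg_left (hxr t ht) (hm0 t ht)]
  have hu_le : ∀ s ∈ Icc 0 t, |u t s (x s) (x (l * s))| ≤ ustar t + n t * Φ r₀ r₀ := by
    intro s hs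
    have hmod := humod t s hs.1 hs.2 0 0 (x s) (x (l * s))
    rw [sub_zero, sub_zero] at hmod
    have hΦ_le := hΦmono _ _ _ _ (abs_nonneg _) (abs_nonneg _) (hxr s hs.1)
      (hxr _ (mul_nonneg hl.le hs.1))
    linarith [abs_sub_abs_le_abs_sub (u t s (x s) (x (l * s))) (u t s 0 0),
      (hustar t ht).2 ⟨s, hs, rfl⟩, mul_le_mul_of_nonneg_left hΦ_le (hn0 t ht)]
  exact abs_add_div_Gamma_mul_le hα (hA.1 ⟨t, ht, rfl⟩) hf_le
    (abs_integral_mul_sub_rpow_le hα ht hu_le)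
    (add_mul_add_mul_le hr₀.le (hΦnn r₀ r₀ hr₀.le hr₀.le) (hφlub.1 ⟨t, ht, rfl⟩)
      (hψlub.1 ⟨t, ht, rfl⟩) (hξlub.1 ⟨t, ht, rfl⟩) (hηlub.1 ⟨t, ht, rfl⟩))
    hineq

/-- Under hypotheses (h₁)–(h₅), the operator
`(𝓕x)(t) = a(t) + (f(t,x(t))/Γ(α)) ∫₀ᵗ u(t,s,x(s),x(λs)) (t-s)^{α-1} ds`
maps the ball `B_{r₀}` of `BC(ℝ≥0)` into itself. -/
theorem stmt9
    (α l : ℝ) (hα : 0 < α) (hα1 : α < 1) (hl : 0 < l) (hl1 : l < 1)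
    (a m n : ℝ → ℝ) (f : ℝ → ℝ → ℝ) (u : ℝ → ℝ → ℝ → ℝ → ℝ) (Φ : ℝ → ℝ → ℝ)
    (ustar : ℝ → ℝ) (normA φs ψs ξs ηs r₀ : ℝ)
    -- (h₁) : a is continuous and bounded on ℝ≥0, with sup norm normA
    (ha : ContinuousOn a (Set.Ici 0))
    (hA : IsLUB ((fun t => |a t|) '' Set.Ici 0) normA)
    -- (h₂) : f is continuous and Lipschitz in its second variable with coefficient m
    (hf : ContinuousOn (fun p : ℝ × ℝ => f p.1 p.2) (Set.Ici 0 ×ˢ Set.univ))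
    (hmc : ContinuousOn m (Set.Ici 0)) (hm0 : ∀ t ∈ Set.Ici (0:ℝ), 0 ≤ m t)
    (hLip : ∀ t ∈ Set.Ici (0:ℝ), ∀ x y : ℝ, |f t x - f t y| ≤ m t * |x - y|)
    -- (h₃) : u is continuous with modulus of continuity n(t) Φ
    (hu : ContinuousOn (fun p : ℝ × ℝ × ℝ × ℝ => u p.1 p.2.1 p.2.2.1 p.2.2.2)
      (Set.Ici 0 ×ˢ Set.Ici 0 ×ˢ Set.univ ×ˢ Set.univ))
    (hnc : ContinuousOn n (Set.Ici 0)) (hn0 : ∀ t ∈ Set.Ici (0:ℝ), 0 ≤ n t)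
    (hΦc : ContinuousOn (fun p : ℝ × ℝ => Φ p.1 p.2) (Set.Ici 0 ×ˢ Set.Ici 0))
    (hΦmono : ∀ p q p' q' : ℝ, 0 ≤ p → 0 ≤ q → p ≤ p' → q ≤ q' → Φ p q ≤ Φ p' q')
    (hΦ0 : Φ 0 0 = 0)
    (hΦnn : ∀ p q : ℝ, 0 ≤ p → 0 ≤ q → 0 ≤ Φ p q)
    (humod : ∀ t s : ℝ, 0 ≤ s → s ≤ t → ∀ x₁ y₁ x₂ y₂ : ℝ,
      |u t s x₂ y₂ - u t s x₁ y₁| ≤ n t * Φ |x₂ - x₁| |y₂ - y₁|)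
    -- u*(t) = max_{0 ≤ s ≤ t} |u(t,s,0,0)|
    (hustar : ∀ t ∈ Set.Ici (0:ℝ),
      IsGreatest ((fun s => |u t s 0 0|) '' Set.Icc 0 t) (ustar t))
    -- (h₄) : φ, ψ, ξ, η are bounded with suprema φ*, ψ*, ξ*, η*, and φ, ξ → 0 at ∞
    (hφlub : IsLUB ((fun t => m t * n t * t ^ α) '' Set.Ici 0) φs)
    (hψlub : IsLUB ((fun t => m t * ustar t * t ^ α) '' Set.Ici 0) ψs)
    (hξlub : IsLUB ((fun t => n t * |f t 0| * t ^ α) '' Set.Ici 0) ξs)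
    (hηlub : IsLUB ((fun t => ustar t * |f t 0| * t ^ α) '' Set.Ici 0) ηs)
    (hφ0 : Filter.Tendsto (fun t => m t * n t * t ^ α) Filter.atTop (nhds 0))
    (hξ0 : Filter.Tendsto (fun t => n t * |f t 0| * t ^ α) Filter.atTop (nhds 0))
    -- (h₅)
    (hr₀ : 0 < r₀)
    (hineq : normA * Real.Gamma (α + 1) +
      (φs * r₀ * Φ r₀ r₀ + ψs * r₀ + ξs * Φ r₀ r₀ + ηs) ≤ r₀ * Real.Gamma (α + 1))
    (hk : φs * Φ r₀ r₀ + ψs < Real.Gamma (α + 1))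
    -- x ∈ B_{r₀}
    (x : ℝ → ℝ) (hx : ContinuousOn x (Set.Ici 0))
    (hxr : ∀ t ∈ Set.Ici (0:ℝ), |x t| ≤ r₀) :
    ContinuousOn
      (fun t : ℝ => a t + (f t (x t) / Real.Gamma α) *
        ∫ s in (0:ℝ)..t, u t s (x s) (x (l * s)) * (t - s) ^ (α - 1))
      (Set.Ici 0) ∧
    ∀ t ∈ Set.Ici (0:ℝ),
      |a t + (f t (x t) / Real.Gamma α) *
        ∫ s in (0:ℝ)..t, u t s (x s) (x (l * s)) * (t - s) ^ (α - 1)| ≤ r₀ :=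
  stmt9_general α l hα hl a m n f u Φ ustar normA φs ψs ξs ηs r₀ ha hA hf hm0 hLip hu hn0 hΦmono
    hΦnn humod hustar hφlub hψlub hξlub hηlub hr₀ hineq x hx hxr
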